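/- arXiv:1510.05320 — 4 statements merged into one kernel-verified Lean document; each statement's English description precedes it below -/
import Mathlib

section
/- The image of the map Q_s : S⁶ → ℝ³ defined by Q_s(a,c) = (|a|, Re a, ⟨Im a, Im c⟩) on the unit sphere S⁶ ⊂ ℍ ⊕ Im ℍ is exactly {(x,y,z) : 0 ≤ x ≤ 1, −x ≤ y ≤ x, z² ≤ (x² − y²)(1 − x²)}. -/
/-!
Both directions come down to the splitting `‖q‖² = (re q)² + ‖im q‖²`. For `(a, c)` on the sphere,
`‖c‖² = 1 - ‖a‖²` and `c = im c`, so Cauchy–Schwarz in `Im ℍ` gives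
`⟨im a, im c⟩² ≤ (‖a‖² - (re a)²)(1 - ‖a‖²)`. Conversely, a point `(x, y, z)` of the region is hit by
`a = y + s i` with `s = √(x² - y²)` and `c = u i + v j`, where `s u = z` and `u² + v² = 1 - x²`.
-/

open Quaternion

namespace Quaternion

lemma sq_norm_eq (a : ℍ) : ‖a‖ ^ 2 = a.re ^ 2 + a.imI ^ 2 + a.imJ ^ 2 + a.imK ^ 2 := by
  rw [sq, ← normSq_eq_norm_mul_self, normSq_def']

lemma sq_norm_eq_sq_re_add_sq_norm_im (a : ℍ) : ‖a‖ ^ 2 = a.re ^ 2 + ‖a.im‖ ^ 2 := by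
  simp only [sq_norm_eq, re_im, imI_im, imJ_im, imK_im]
  ring

lemma abs_re_le_norm (a : ℍ) : |a.re| ≤ ‖a‖ := by
  rw [← abs_norm, ← sq_le_sq, sq_norm_eq_sq_re_add_sq_norm_im]
  exact le_add_of_nonneg_right (sq_nonneg _)

lemma inner_im_im (a c : ℍ) :
    inner ℝ a.im c.im = a.imI * c.imI + a.imJ * c.imJ + a.imK * c.imK := by
  simp only [inner_def, star_im, mul_neg, re_neg, re_mul, re_im, mul_zero, imI_im, zero_sub,
    imJ_im, imK_im, neg_sub]
  ring

lemma sq_inner_im_le {a c : ℍ} (hc : c.re = 0) (hac : ‖a‖ ^ 2 + ‖c‖ ^ 2 = 1) :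
    inner ℝ a.im c.im ^ 2 ≤ (‖a‖ ^ 2 - a.re ^ 2) * (1 - ‖a‖ ^ 2) :=
  calc inner ℝ a.im c.im ^ 2 ≤ (‖a.im‖ * ‖c.im‖) ^ 2 :=
        sq_le_sq.mpr <| (abs_real_inner_le_norm _ _).trans (le_abs_self _)
    _ = (‖a‖ ^ 2 - a.re ^ 2) * (1 - ‖a‖ ^ 2) := by
        have ha := sq_norm_eq_sq_re_add_sq_norm_im a
        have hc' := sq_norm_eq_sq_re_add_sq_norm_im c
        rw [hc] at hc'
        linear_combination (‖a‖ ^ 2 - 1) * ha + ‖a.im‖ ^ 2 * hac - ‖a.im‖ ^ 2 * hc'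

end Quaternion

/-- With the convention `z / 0 = 0`, the choice `u = z / s` also covers `s = 0`, where `z = 0`. -/
lemma exists_sq_add_sq_eq_and_mul_eq {s z R : ℝ} (hR : 0 ≤ R) (h : z ^ 2 ≤ s ^ 2 * R) :
    ∃ u v : ℝ, u ^ 2 + v ^ 2 = R ∧ s * u = z := by
  rcases eq_or_ne s 0 with rfl | hs
  · exact ⟨0, √R, by simp [Real.sq_sqrt hR], by nlinarith [sq_nonneg z]⟩
  · have hu : (z / s) ^ 2 ≤ R := by
      rw [div_pow, div_le_iff₀ (by positivity)]; linarith
    exact ⟨z / s, √(R - (z / s) ^ 2), by rw [Real.sq_sqrt (by linarith)]; ring, mul_div_cancel₀ z hs⟩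

theorem stmt_1 :
    {p : ℝ × ℝ × ℝ | ∃ a c : ℍ, c.re = 0 ∧ ‖a‖ ^ 2 + ‖c‖ ^ 2 = 1 ∧
      p = (‖a‖, a.re, (inner ℝ a.im c.im : ℝ))} =
    {p : ℝ × ℝ × ℝ | 0 ≤ p.1 ∧ p.1 ≤ 1 ∧ -p.1 ≤ p.2.1 ∧ p.2.1 ≤ p.1 ∧
      p.2.2 ^ 2 ≤ (p.1 ^ 2 - p.2.1 ^ 2) * (1 - p.1 ^ 2)} := by
  ext ⟨x, y, z⟩
  simp only [Set.mem_ofPred_eq, Prod.mk.injEq]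
  constructor
  · rintro ⟨a, c, hc, hac, rfl, rfl, rfl⟩
    have hre := abs_le.mp (abs_re_le_norm a)
    have ha1 : ‖a‖ ≤ 1 := by nlinarith [norm_nonneg a, sq_nonneg ‖c‖]
    exact ⟨norm_nonneg a, ha1, hre.1, hre.2, sq_inner_im_le hc hac⟩
  · rintro ⟨hx0, hx1, hyl, hyu, hz⟩
    have hxy : 0 ≤ x ^ 2 - y ^ 2 := by nlinarith
    obtain ⟨u, v, huv, hu⟩ := exists_sq_add_sq_eq_and_mul_eq (s := √(x ^ 2 - y ^ 2)) (z := z)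
      (R := 1 - x ^ 2) (by nlinarith) (by rwa [Real.sq_sqrt hxy])
    obtain ⟨a, ha_re, ha_i, ha_j, ha_k⟩ :
        ∃ a : ℍ, a.re = y ∧ a.imI = √(x ^ 2 - y ^ 2) ∧ a.imJ = 0 ∧ a.imK = 0 :=
      ⟨⟨y, √(x ^ 2 - y ^ 2), 0, 0⟩, rfl, rfl, rfl, rfl⟩
    obtain ⟨c, hc_re, hc_i, hc_j, hc_k⟩ : ∃ c : ℍ, c.re = 0 ∧ c.imI = u ∧ c.imJ = v ∧ c.imK = 0 :=
      ⟨⟨0, u, v, 0⟩, rfl, rfl, rfl, rfl⟩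
    have hax : ‖a‖ ^ 2 = x ^ 2 := by
      rw [sq_norm_eq, ha_re, ha_i, ha_j, ha_k, Real.sq_sqrt hxy]; ring
    refine ⟨a, c, hc_re, ?_, (sq_eq_sq₀ hx0 (norm_nonneg a)).mp hax.symm, ha_re.symm, ?_⟩
    · rw [hax, sq_norm_eq, hc_re, hc_i, hc_j, hc_k]; linear_combination huv
    · rw [inner_im_im, ha_i, ha_j, ha_k, hc_i, ← hu]; ring
end

section
/- If two points (a₁,c₁), (a₂,c₂) of the unit sphere in ℍ ⊕ Im ℍ satisfy Q_s(a₁,c₁) = Q_s(a₂,c₂), where Q_s(a,c) = (|a|, Re a, ⟨Im a, Im c⟩), then there exists a quaternion algebra automorphism g of ℍ with (g(a₁), g(c₁)) = (a₂, c₂). -/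
/-!
Conjugations `x ↦ q x q⁻¹` are algebra automorphisms of `ℍ` fixing the real axis, so it suffices
to conjugate the pair of pure quaternions `(Im a₁, c₁)` to `(Im a₂, c₂)`, two pairs with the same
norms and the same inner product `-(u v).re`. If `w₁, w₂` are pure of the same norm `N`, then
`q = N - w₂ w₁` satisfies `q w₁ = w₂ q`, and `q` commutes with every pure `u` orthogonal to `w₁`
and `w₂`, since `u` anticommutes with both. This `q` vanishes only if `w₂ = -w₁`; then `u` itself,
or for `u = 0` a pure quaternion orthogonal to `w₁`, anticommutes with `w₁` instead. Applying this
first with `u = 0` moves `Im a₁` to `Im a₂`; applying it with `u = Im a₂` to the components of the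
second vectors orthogonal to `Im a₂` then moves the second vector while fixing `Im a₂`.
-/

namespace Quaternion

variable {p u v w u₁ u₂ v₁ v₂ w₁ w₂ : ℍ}

theorem re_mul_comm (p q : ℍ) : (p * q).re = (q * p).re := by
  simp only [re_mul]; ring

theorem re_conj (hp : p ≠ 0) (x : ℍ) : (p * x * p⁻¹).re = x.re := by
  rw [re_mul_comm, ← mul_assoc, inv_mul_cancel₀ hp, one_mul]

theorem normSq_conj (hp : p ≠ 0) (x : ℍ) : normSq (p * x * p⁻¹) = normSq x := by
  have : normSq p ≠ 0 := normSq_ne_zero.2 hp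
  rw [map_mul, map_mul, map_inv₀]
  field_simp

theorem normSq_eq_re_sq_add_normSq_im (a : ℍ) : normSq a = a.re ^ 2 + normSq a.im := by
  simp only [normSq_def', re_im, imI_im, imJ_im, imK_im]; ring

theorem im_eq_self_of_re_eq_zero (hu : u.re = 0) : u.im = u := by
  rw [← sub_eq_zero, ← neg_sub, sub_im_self, hu, coe_zero, neg_zero]

theorem mul_self_eq_neg_normSq (hu : u.re = 0) : u * u = -((normSq u : ℝ) : ℍ) := by
  rw [← sq, sq_eq_neg_normSq.2 hu]

theorem mul_comm_eq_neg_of_re_mul_eq_zero (hu : u.re = 0) (hv : v.re = 0)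
    (huv : (u * v).re = 0) : v * u = -(u * v) := by
  rw [re_mul, hu, hv] at huv
  ext <;> simp only [re_mul, imI_mul, imJ_mul, imK_mul, re_neg, imI_neg, imJ_neg, imK_neg, hu, hv]
    <;> linarith

theorem normSq_add_smul (hu : u.re = 0) (hv : v.re = 0) (t : ℝ) :
    normSq (v + t • u) = normSq v - 2 * t * (u * v).re + t ^ 2 * normSq u := by
  simp only [normSq_def', re_mul, re_add, imI_add, imJ_add, imK_add, re_smul, imI_smul, imJ_smul,
    imK_smul, smul_eq_mul, hu, hv]
  ring

theorem re_mul_add_smul_eq_zero (hu : u.re = 0) (v : ℍ) :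
    (u * (v + ((u * v).re / normSq u) • u)).re = 0 := by
  rcases eq_or_ne u 0 with rfl | hu₀
  · simp
  have : normSq u ≠ 0 := normSq_ne_zero.2 hu₀
  rw [mul_add, mul_smul_comm, re_add, re_smul, mul_self_eq_neg_normSq hu]
  simp only [re_neg, re_coe, smul_eq_mul]
  field_simp
  ring

theorem exists_ne_zero_re_eq_zero_re_mul_eq_zero (w : ℍ) :
    ∃ q : ℍ, q ≠ 0 ∧ q.re = 0 ∧ (q * w).re = 0 := by
  -- `show ℍ from` is needed: `(⟨…⟩ : ℍ)` elaborates in the type `ℍ[ℝ,-1,-1]`, not in `ℍ`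
  by_cases h : w.imI = 0 ∧ w.imJ = 0
  · refine ⟨show ℍ from ⟨0, 1, 0, 0⟩, fun h0 => one_ne_zero (congrArg QuaternionAlgebra.imI h0),
      rfl, by rw [re_mul]; simp [h.1]⟩
  · refine ⟨show ℍ from ⟨0, w.imJ, -w.imI, 0⟩, fun h0 => h ?_, rfl,
      by rw [re_mul]; ring⟩
    exact ⟨neg_eq_zero.1 (congrArg QuaternionAlgebra.imJ h0),
      congrArg QuaternionAlgebra.imI h0⟩

theorem exists_commute_mul_eq_neg (hu : u.re = 0) (hw : w.re = 0) (huw : (u * w).re = 0) :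
    ∃ q : ℍ, q ≠ 0 ∧ q * u = u * q ∧ q * w = -w * q := by
  rcases eq_or_ne u 0 with rfl | hu₀
  · obtain ⟨q, hq, hqre, hqw⟩ := exists_ne_zero_re_eq_zero_re_mul_eq_zero w
    refine ⟨q, hq, by simp, ?_⟩
    rw [neg_mul, mul_comm_eq_neg_of_re_mul_eq_zero hqre hw hqw, neg_neg]
  · refine ⟨u, hu₀, rfl, ?_⟩
    rw [neg_mul, mul_comm_eq_neg_of_re_mul_eq_zero hu hw huw, neg_neg]

theorem exists_commute_conj_eq_of_re_mul_eq_zero (hu : u.re = 0) (hw₁ : w₁.re = 0)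
    (hw₂ : w₂.re = 0) (huw₁ : (u * w₁).re = 0) (huw₂ : (u * w₂).re = 0)
    (hN : normSq w₁ = normSq w₂) :
    ∃ q : ℍ, q ≠ 0 ∧ q * u = u * q ∧ q * w₁ = w₂ * q := by
  have hsq₁ : w₁ * w₁ = -((normSq w₁ : ℝ) : ℍ) := mul_self_eq_neg_normSq hw₁
  have hsq₂ : w₂ * w₂ = -((normSq w₁ : ℝ) : ℍ) := by rw [mul_self_eq_neg_normSq hw₂, hN]
  by_cases hq : ((normSq w₁ : ℝ) : ℍ) - w₂ * w₁ = 0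
  · have hw : w₂ = -w₁ := by
      rcases eq_or_ne w₁ 0 with rfl | hw₁₀
      · rw [map_zero, eq_comm, normSq_eq_zero] at hN
        rw [hN, neg_zero]
      have : (w₂ + w₁) * w₁ = 0 := by rw [add_mul, ← sub_eq_zero.1 hq, hsq₁, add_neg_cancel]
      exact eq_neg_of_add_eq_zero_left ((mul_eq_zero.1 this).resolve_right hw₁₀)
    obtain ⟨q, hq, hqu, hqw⟩ := exists_commute_mul_eq_neg hu hw₁ huw₁
    exact ⟨q, hq, hqu, hw ▸ hqw⟩
  refine ⟨_, hq, ?_, ?_⟩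
  · rw [sub_mul, mul_sub, coe_commutes, mul_assoc, mul_comm_eq_neg_of_re_mul_eq_zero hu hw₁ huw₁,
      mul_neg, ← mul_assoc, mul_comm_eq_neg_of_re_mul_eq_zero hu hw₂ huw₂, neg_mul, neg_neg,
      mul_assoc]
  · rw [sub_mul, mul_sub, mul_assoc, hsq₁, ← mul_assoc, hsq₂, mul_neg, neg_mul, sub_neg_eq_add,
      sub_neg_eq_add, add_comm]

theorem exists_commute_conj_eq_of_re_mul_eq (hu : u.re = 0) (hv₁ : v₁.re = 0)
    (hv₂ : v₂.re = 0) (hN : normSq v₁ = normSq v₂) (huv : (u * v₁).re = (u * v₂).re) :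
    ∃ q : ℍ, q ≠ 0 ∧ q * u = u * q ∧ q * v₁ = v₂ * q := by
  -- for `u = 0` the junk value `t = 0` reduces this to conjugating `v₁` to `v₂` directly
  set t := (u * v₁).re / normSq u
  have hw₁ : (u * (v₁ + t • u)).re = 0 := re_mul_add_smul_eq_zero hu v₁
  have hw₂ : (u * (v₂ + t • u)).re = 0 := by
    have := re_mul_add_smul_eq_zero hu v₂
    rwa [← huv] at this
  obtain ⟨q, hq, hqu, hqv⟩ := exists_commute_conj_eq_of_re_mul_eq_zero hu
    (by simp [hv₁, hu]) (by simp [hv₂, hu]) hw₁ hw₂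
    (by rw [normSq_add_smul hu hv₁, normSq_add_smul hu hv₂, hN, huv])
  refine ⟨q, hq, hqu, ?_⟩
  rw [mul_add, add_mul, mul_smul_comm, smul_mul_assoc, hqu] at hqv
  exact add_right_cancel hqv

theorem exists_conj_pair_eq_of_re_mul_eq (hu₁ : u₁.re = 0) (hv₁ : v₁.re = 0)
    (hu₂ : u₂.re = 0) (hv₂ : v₂.re = 0) (hu : normSq u₁ = normSq u₂) (hv : normSq v₁ = normSq v₂)
    (huv : (u₁ * v₁).re = (u₂ * v₂).re) :
    ∃ q : ℍ, q ≠ 0 ∧ q * u₁ = u₂ * q ∧ q * v₁ = v₂ * q := by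
  obtain ⟨p, hp, -, hpu⟩ :=
    exists_commute_conj_eq_of_re_mul_eq_zero (u := 0) rfl hu₁ hu₂ (by simp) (by simp) hu
  have hpv : p * v₁ * p⁻¹ * p = p * v₁ := inv_mul_cancel_right₀ hp _
  have hu₂v : u₂ * (p * v₁ * p⁻¹) = p * (u₁ * v₁) * p⁻¹ := by
    rw [← mul_assoc, ← mul_assoc, ← hpu, mul_assoc p]
  obtain ⟨q, hq, hqu, hqv⟩ := exists_commute_conj_eq_of_re_mul_eq hu₂
    (v₁ := p * v₁ * p⁻¹) (by rw [re_conj hp, hv₁]) hv₂ (by rw [normSq_conj hp, hv])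
    (by rw [hu₂v, re_conj hp, huv])
  refine ⟨q * p, mul_ne_zero hq hp, ?_, ?_⟩
  · rw [mul_assoc, hpu, ← mul_assoc, hqu, mul_assoc]
  · rw [mul_assoc, ← hpv, ← mul_assoc q, hqv, mul_assoc]

end Quaternion

open Quaternion

theorem stmt_3 (a₁ c₁ a₂ c₂ : ℍ)
    (hc₁ : c₁.re = 0) (hc₂ : c₂.re = 0)
    (h1 : ‖a₁‖ ^ 2 + ‖c₁‖ ^ 2 = 1) (h2 : ‖a₂‖ ^ 2 + ‖c₂‖ ^ 2 = 1)
    (ha : ‖a₁‖ = ‖a₂‖) (hre : a₁.re = a₂.re)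
    (hinner : (inner ℝ a₁.im c₁.im : ℝ) = inner ℝ a₂.im c₂.im) :
    ∃ g : ℍ ≃ₐ[ℝ] ℍ, g a₁ = a₂ ∧ g c₁ = c₂ := by
  have hna : normSq a₁ = normSq a₂ := by
    rw [normSq_eq_norm_mul_self, normSq_eq_norm_mul_self, ha]
  have hnc : normSq c₁ = normSq c₂ := by
    rw [normSq_eq_norm_mul_self, normSq_eq_norm_mul_self, ← sq, ← sq]
    rw [ha] at h1
    linarith
  have him : normSq a₁.im = normSq a₂.im := by
    rw [normSq_eq_re_sq_add_normSq_im a₁, normSq_eq_re_sq_add_normSq_im a₂, hre] at hna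
    exact add_left_cancel hna
  have hac : (a₁.im * c₁).re = (a₂.im * c₂).re := by
    rwa [inner_def, inner_def, star_eq_neg.2 (re_im _), star_eq_neg.2 (re_im _), mul_neg,
      mul_neg, re_neg, re_neg, neg_inj, im_eq_self_of_re_eq_zero hc₁,
      im_eq_self_of_re_eq_zero hc₂] at hinner
  obtain ⟨q, hq, hqa, hqc⟩ :=
    exists_conj_pair_eq_of_re_mul_eq (re_im a₁) hc₁ (re_im a₂) hc₂ him hnc hac
  refine ⟨MulSemiringAction.toAlgEquiv ℝ ℍ (ConjAct.toConjAct (Units.mk0 q hq)), ?_, ?_⟩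
  all_goals simp only [MulSemiringAction.toAlgEquiv_apply, ConjAct.units_smul_def,
    ConjAct.ofConjAct_toConjAct, Units.val_mk0, Units.val_inv_eq_inv_val]
  · rw [← re_add_im a₁, mul_add, add_mul, ← coe_commutes, hqa, mul_inv_cancel_right₀ hq,
      mul_inv_cancel_right₀ hq, hre, re_add_im]
  · rw [hqc, mul_inv_cancel_right₀ hq]
end

section
/- Let h, j be integers with h + j = 1 and consider the gluing map Φ(u,q) = (u/|u|², (u/|u|)ʰ q (u/|u|)^{1−h}) on (ℍ \ {0}) × S³. Then the function f(u,q) = Re(q)/√(1+|u|²) on ℍ × S³ is compatible with the gluing, i.e. for all u ≠ 0 and |q| = 1, Re(v r⁻¹)/√(1+|v|²) = Re(q)/√(1+|u|²), where v = u/|u|² and r = (u/|u|)ʰ q (u/|u|)^{1−h}. -/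
open Quaternion

theorem stmt_17 (u q : ℍ) (hu : u ≠ 0) (hq : ‖q‖ = 1) (h : ℤ)
    (v r : ℍ) (hv : v = (‖u‖ ^ 2)⁻¹ • u)
    (hr : r = (‖u‖⁻¹ • u) ^ h * q * (‖u‖⁻¹ • u) ^ (1 - h)) :
    (v * r⁻¹).re / Real.sqrt (1 + ‖v‖ ^ 2) = q.re / Real.sqrt (1 + ‖u‖ ^ 2) := by
  set w : ℍ := ‖u‖⁻¹ • u with hw
  have hnu : ‖u‖ ≠ 0 := norm_ne_zero_iff.mpr hu
  have hnw : ‖w‖ = 1 := by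
    rw [hw, norm_smul, norm_inv, norm_norm, inv_mul_cancel₀ hnu]
  have hw0 : w ≠ 0 := by
    intro hh; rw [hh, norm_zero] at hnw; norm_num at hnw
  have hq0 : q ≠ 0 := by
    intro hh; rw [hh, norm_zero] at hq; norm_num at hq
  -- q⁻¹ = star q
  have hqi : q⁻¹ = star q := by
    refine inv_eq_of_mul_eq_one_right ?_
    rw [Quaternion.self_mul_star, Quaternion.normSq_eq_norm_mul_self, hq]
    norm_num
  -- v = ‖u‖⁻¹ • w
  have hv' : v = ‖u‖⁻¹ • w := by
    rw [hv, hw, smul_smul]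
    congr 1
    rw [sq]
    field_simp
  -- compute v * r⁻¹
  have hr' : v * r⁻¹ = ‖u‖⁻¹ • (w ^ h * q⁻¹ * w ^ (-h)) := by
    rw [hr, hv']
    rw [mul_inv_rev, mul_inv_rev, ← zpow_neg, ← zpow_neg]
    rw [smul_mul_assoc]
    congr 1
    have : w * w ^ (-(1 - h)) = w ^ h := by
      rw [← zpow_one_add₀ hw0]
      ring_nf
    rw [← mul_assoc, ← mul_assoc, this]
  -- Re of conjugated element
  have hre : (w ^ h * q⁻¹ * w ^ (-h)).re = q.re := by
    have comm : ∀ a b : ℍ, (a * b).re = (b * a).re := by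
      intro a b; simp [Quaternion.re_mul]; ring
    rw [comm (w ^ h * q⁻¹) (w ^ (-h))]
    have : w ^ (-h) * (w ^ h * q⁻¹) = q⁻¹ := by
      rw [← mul_assoc, ← zpow_add₀ hw0]
      simp
    rw [this, hqi, Quaternion.re_star]
  have hvnorm : ‖v‖ = ‖u‖⁻¹ := by
    rw [hv', norm_smul, hnw, norm_inv, norm_norm, mul_one]
  have hreLHS : (v * r⁻¹).re = ‖u‖⁻¹ * q.re := by
    rw [hr']
    simp only [Quaternion.re_smul, hre, smul_eq_mul]
  rw [hreLHS, hvnorm]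
  have hpos : (0:ℝ) < ‖u‖ := lt_of_le_of_ne (norm_nonneg u) (Ne.symm hnu)
  have hsq : Real.sqrt (1 + (‖u‖⁻¹) ^ 2) = Real.sqrt (1 + ‖u‖ ^ 2) / ‖u‖ := by
    rw [eq_div_iff hnu, ← Real.sqrt_sq hpos.le, ← Real.sqrt_mul (by positivity)]
    congr 1
    field_simp
    rw [Real.sqrt_sq hpos.le]
    ring
  rw [hsq]
  have hs : Real.sqrt (1 + ‖u‖ ^ 2) ≠ 0 := by positivity
  field_simp
end

section
/- Let Q_k be defined on U₁ = {(u,q) ∈ ℍ × S³ : Re q = 0} by Q_k(u,q) = φ(u)·(|u|, Re(uq), φ(u)⟨Im(uq), Im q⟩) where φ(u) = 1/√(1+|u|²). Then for u ≠ 0 and h ∈ ℤ, with v = u/|u|² and r = (u/|u|)ʰ q (u/|u|)^{−(h−1)}, one has φ(v)·(|r|, Re r, φ(v)⟨Im r, Im(v̄ r)⟩) = Q_k(u,q). -/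
/-!
Put `w = u / |u|`, a unit quaternion, so that `v = |u|⁻¹ w`, `v̄ = |u|⁻¹ w⁻¹` and
`r = wʰ q w^{1-h}` is a unit quaternion. Since `Re (ab) = Re (ba)`, the real part of a
product of powers of `w` and `q` only depends on the total exponent of `w`: this gives
`Re r = Re (w q) = |u|⁻¹ Re (uq)` and `Re (v̄ r) = |u|⁻¹ Re q = 0`. For `Re y = 0` the inner
product of imaginary parts is `⟨Im x, Im y⟩ = Re (x ȳ)`, which evaluates to `Re v` and `Re u`
in the two third components. Finally `φ v = |u| φ u`.
-/

open Quaternion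

namespace Quaternion

theorem re_mul_comm_s18 (a b : ℍ) : (a * b).re = (b * a).re := by
  simp only [re_mul]
  ring

theorem re_zpow_mul_mul_zpow {w : ℍ} (hw : w ≠ 0) (a : ℍ) (m n : ℤ) :
    (w ^ m * a * w ^ n).re = (w ^ (n + m) * a).re := by
  rw [re_mul_comm_s18, ← mul_assoc, ← zpow_add₀ hw]

theorem inner_im_im_of_re_eq_zero (x : ℍ) {y : ℍ} (hy : y.re = 0) :
    inner ℝ x.im y.im = (x * star y).re := by
  simp only [inner_def, re_mul, re_star, re_im, imI_im, imJ_im, imK_im, imI_star, imJ_star,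
    imK_star, hy]
  ring

theorem self_mul_star_of_norm_eq_one {a : ℍ} (ha : ‖a‖ = 1) : a * star a = 1 := by
  rw [self_mul_star, normSq_eq_norm_mul_self, ha, mul_one, coe_one]

theorem star_eq_inv_of_norm_eq_one {a : ℍ} (ha : ‖a‖ = 1) : star a = a⁻¹ :=
  eq_inv_of_mul_eq_one_right (self_mul_star_of_norm_eq_one ha)

end Quaternion

theorem Real.one_div_sqrt_one_add_inv_sq {x : ℝ} (hx : 0 < x) :
    1 / √(1 + x⁻¹ ^ 2) = x / √(1 + x ^ 2) := by
  rw [show 1 + x⁻¹ ^ 2 = (1 + x ^ 2) * x⁻¹ ^ 2 by field_simp; ring,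
    Real.sqrt_mul (by positivity), Real.sqrt_sq (by positivity)]
  field_simp

theorem stmt_18 (φ : ℍ → ℝ) (hφ : ∀ u, φ u = 1 / Real.sqrt (1 + ‖u‖ ^ 2))
    (u q : ℍ) (hu : u ≠ 0) (hq : q.re = 0) (hq1 : ‖q‖ = 1) (h : ℤ)
    (v r : ℍ) (hv : v = (‖u‖ ^ 2)⁻¹ • u)
    (hr : r = (‖u‖⁻¹ • u) ^ h * q * (‖u‖⁻¹ • u) ^ (-(h - 1))) :
    (φ v * ‖r‖, φ v * r.re, φ v * (φ v * (inner ℝ r.im (star v * r).im : ℝ))) =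
    (φ u * ‖u‖, φ u * (u * q).re, φ u * (φ u * (inner ℝ (u * q).im q.im : ℝ))) := by
  have hu_pos : 0 < ‖u‖ := norm_pos_iff.mpr hu
  set w := ‖u‖⁻¹ • u with hw
  have hw1 : ‖w‖ = 1 := norm_smul_inv_norm hu
  have hw0 : w ≠ 0 := norm_ne_zero_iff.mp (hw1 ▸ one_ne_zero)
  have hv_w : v = ‖u‖⁻¹ • w := by rw [hv, hw, smul_smul, sq, mul_inv]
  have hφv : φ v = φ u * ‖u‖ := by
    rw [hφ, hφ, hv_w, norm_smul, hw1, mul_one, norm_inv, norm_norm,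
      Real.one_div_sqrt_one_add_inv_sq hu_pos, mul_comm, mul_one_div]
  have hr_norm : ‖r‖ = 1 := by simp [hr, norm_zpow, hw1, hq1]
  have hr_re : r.re = ‖u‖⁻¹ * (u * q).re := by
    rw [hr, re_zpow_mul_mul_zpow hw0, show -(h - 1) + h = 1 by ring, zpow_one, hw,
      smul_mul_assoc, re_smul, smul_eq_mul]
  have hvr_re : (star v * r).re = 0 := by
    rw [hv_w, hr, Quaternion.star_smul, star_eq_inv_of_norm_eq_one hw1, ← zpow_neg_one w, smul_mul_assoc,
      re_smul, re_mul_comm_s18, mul_assoc (w ^ h * q), ← zpow_add₀ hw0, re_zpow_mul_mul_zpow hw0,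
      show -(h - 1) + -1 + h = 0 by ring, zpow_zero, one_mul, hq, smul_zero]
  have hinner_r : inner ℝ r.im (star v * r).im = v.re := by
    rw [inner_im_im_of_re_eq_zero r hvr_re, star_mul, star_star, ← mul_assoc,
      self_mul_star_of_norm_eq_one hr_norm, one_mul]
  have hinner_q : inner ℝ (u * q).im q.im = u.re := by
    rw [inner_im_im_of_re_eq_zero _ hq, mul_assoc, self_mul_star_of_norm_eq_one hq1, mul_one]
  have hv_re : v.re = (‖u‖ ^ 2)⁻¹ * u.re := by rw [hv, re_smul, smul_eq_mul]
  rw [hφv, hr_norm, hr_re, hinner_r, hinner_q, hv_re]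
  refine Prod.ext (by ring) (Prod.ext ?_ ?_) <;> field_simp
end
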